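/- Let Ω ⊆ ℝ^d be compact and let ρ : ℝ^d → ℝ be a continuous probability density. Let ρ₁(x₁) = ∫_{ℝ^{d-1}} ρ(x₁, x₂, …, x_d) dx₂…dx_d be its first one-dimensional marginal. Then ρ₁ is a discriminatory function: if a finite signed Borel measure μ on Ω satisfies ∫_Ω ρ₁(yᵀx + θ) dμ(x) = 0 for all y ∈ ℝ^d and θ ∈ ℝ, then μ = 0. -/

import Mathlib

open MeasureTheory

/-- The first one-dimensional marginal of a density on `ℝ^{m+1}`. -/
noncomputable def firstMarginal {m : ℕ} (ρ : (Fin (m + 1) → ℝ) → ℝ) (t : ℝ) : ℝ :=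
  ∫ z : Fin m → ℝ, ρ (Fin.cons t z)

namespace Stmt3Aux

open MeasureTheory Complex
noncomputable def ec (r : ℝ) : ℂ := Complex.exp ((r : ℂ) * Complex.I)
lemma norm_ec (r : ℝ) : ‖ec r‖ = 1 := by
  simp [ec, Complex.norm_exp_ofReal_mul_I]
lemma ec_add (a b : ℝ) : ec (a + b) = ec a * ec b := by
  simp [ec, ← Complex.exp_add]; ring_nf
lemma continuous_ec : Continuous ec :=
  Complex.continuous_exp.comp (Complex.continuous_ofReal.mul continuous_const)
lemma ec_zero : ec 0 = 1 := by simp [ec]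
variable {m : ℕ}
lemma continuous_cons :
    Continuous (fun p : ℝ × (Fin m → ℝ) => (Fin.cons p.1 p.2 : Fin (m+1) → ℝ)) := by
  apply continuous_pi
  intro i
  refine Fin.cases ?_ ?_ i
  · simpa using continuous_fst
  · intro j
    simp only [Fin.cons_succ]; exact (continuous_apply j).comp continuous_snd
lemma consMP (m : ℕ) :
    MeasurePreserving (fun p : ℝ × (Fin m → ℝ) => (Fin.cons p.1 p.2 : Fin (m+1) → ℝ))
      volume volume := by
  have h := (volume_preserving_piFinSuccAbove (fun _ : Fin (m+1) => ℝ) 0).symm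
  have e : (⇑(MeasurableEquiv.piFinSuccAbove (fun _ : Fin (m+1) => ℝ) 0).symm)
      = fun p : ℝ × (Fin m → ℝ) => (Fin.cons p.1 p.2 : Fin (m+1) → ℝ) := by
    funext p
    simp [MeasurableEquiv.piFinSuccAbove, Fin.insertNth_zero', Fin.consEquiv]
  rw [e] at h
  exact h
lemma consEmb (m : ℕ) :
    MeasurableEmbedding (fun p : ℝ × (Fin m → ℝ) => (Fin.cons p.1 p.2 : Fin (m+1) → ℝ)) := by
  have h := (MeasurableEquiv.piFinSuccAbove (fun _ : Fin (m+1) => ℝ) 0).symm.measurableEmbedding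
  have e : (⇑(MeasurableEquiv.piFinSuccAbove (fun _ : Fin (m+1) => ℝ) 0).symm)
      = fun p : ℝ × (Fin m → ℝ) => (Fin.cons p.1 p.2 : Fin (m+1) → ℝ) := by
    funext p
    simp [MeasurableEquiv.piFinSuccAbove, Fin.insertNth_zero', Fin.consEquiv]
  rw [e] at h
  exact h

-- NEW PART
variable (ρ : (Fin (m+1) → ℝ) → ℝ)

lemma marg_nonneg (hρ0 : ∀ x, 0 ≤ ρ x) (t : ℝ) : 0 ≤ firstMarginal ρ t :=
  integral_nonneg fun _ => hρ0 _

lemma prod_integrable (hρi : Integrable ρ) :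
    Integrable (fun p : ℝ × (Fin m → ℝ) => ρ (Fin.cons p.1 p.2)) (volume.prod volume) := by
  have h := ((consMP m).integrable_comp_emb (consEmb m)).mpr hρi
  rw [Measure.volume_eq_prod] at h
  exact h

lemma marg_integrable (hρi : Integrable ρ) : Integrable (firstMarginal ρ) :=
  (prod_integrable ρ hρi).integral_prod_left

lemma marg_sm (hρc : Continuous ρ) : StronglyMeasurable (firstMarginal ρ) :=
  (hρc.comp continuous_cons).stronglyMeasurable.integral_prod_right'

lemma marg_integral (hρi : Integrable ρ) (h1 : ∫ x, ρ x = 1) :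
    ∫ t, firstMarginal ρ t = 1 := by
  have h := prod_integrable ρ hρi
  have h2 := integral_integral (f := fun (t : ℝ) (z : Fin m → ℝ) => ρ (Fin.cons t z)) h
  have h3 : ∫ z, ρ (Fin.cons z.1 z.2) ∂(volume.prod volume) = ∫ x, ρ x := by
    rw [← Measure.volume_eq_prod]
    exact (consMP m).integral_comp (consEmb m) ρ
  calc ∫ t, firstMarginal ρ t = ∫ t, ∫ z, ρ (Fin.cons t z) := rfl
    _ = ∫ z, ρ (Fin.cons z.1 z.2) ∂(volume.prod volume) := h2
    _ = 1 := by rw [h3, h1]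

/-- `Φ(s) = ∫ ρ₁(u) e^{-isu} du`. -/
noncomputable def Phi (ρ : (Fin (m+1) → ℝ) → ℝ) (s : ℝ) : ℂ :=
  ∫ u : ℝ, (firstMarginal ρ u : ℂ) * ec (-(s * u))

lemma g_integrable (hρc : Continuous ρ) (hρ0 : ∀ x, 0 ≤ ρ x) (hρi : Integrable ρ) (s : ℝ) :
    Integrable (fun u : ℝ => (firstMarginal ρ u : ℂ) * ec (-(s * u))) := by
  refine (marg_integrable ρ hρi).mono' ?_ ?_
  · exact ((Complex.continuous_ofReal.comp_stronglyMeasurable (marg_sm ρ hρc)).mul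
      ((continuous_ec.comp (by fun_prop)).stronglyMeasurable)).aestronglyMeasurable
  · filter_upwards with u
    rw [norm_mul, norm_ec, mul_one, Complex.norm_real, Real.norm_eq_abs,
      _root_.abs_of_nonneg (marg_nonneg ρ hρ0 u)]

lemma Phi_zero (hρi : Integrable ρ) (h1 : ∫ x, ρ x = 1) : Phi ρ 0 = 1 := by
  unfold Phi
  simp only [zero_mul, neg_zero, ec_zero, mul_one]
  have : ∫ u : ℝ, ((firstMarginal ρ u : ℝ) : ℂ) = ((∫ u : ℝ, firstMarginal ρ u : ℝ) : ℂ) :=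
    integral_ofReal
  rw [this, marg_integral ρ hρi h1, Complex.ofReal_one]

lemma Phi_continuous (hρc : Continuous ρ) (hρ0 : ∀ x, 0 ≤ ρ x) (hρi : Integrable ρ) :
    Continuous (Phi ρ) := by
  refine continuous_of_dominated
    (F := fun s u => (firstMarginal ρ u : ℂ) * ec (-(s * u)))
    (bound := firstMarginal ρ) (fun s => (g_integrable ρ hρc hρ0 hρi s).1) ?_
    (marg_integrable ρ hρi) ?_
  · intro s
    filter_upwards with u
    rw [norm_mul, norm_ec, mul_one, Complex.norm_real, Real.norm_eq_abs,
      _root_.abs_of_nonneg (marg_nonneg ρ hρ0 u)]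
  · filter_upwards with u
    exact continuous_const.mul (continuous_ec.comp (by fun_prop))

lemma exists_s0 (hρc : Continuous ρ) (hρ0 : ∀ x, 0 ≤ ρ x) (hρi : Integrable ρ)
    (h1 : ∫ x, ρ x = 1) : ∃ s : ℝ, s ≠ 0 ∧ Phi ρ s ≠ 0 := by
  have hcont := Phi_continuous ρ hρc hρ0 hρi
  have h0 : Phi ρ 0 = 1 := Phi_zero ρ hρi h1
  have hev : ∀ᶠ s in nhds (0 : ℝ), Phi ρ s ≠ 0 := by
    have : ContinuousAt (Phi ρ) 0 := hcont.continuousAt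
    exact this.eventually_ne (by simp [h0])
  obtain ⟨ε, hε, hball⟩ := Metric.eventually_nhds_iff.mp hev
  refine ⟨ε / 2, by positivity, hball ?_⟩
  simp only [dist_zero_right, Real.norm_eq_abs]
  rw [abs_of_pos (by positivity)]
  linarith


lemma inner_translate (hρc : Continuous ρ) (hρ0 : ∀ x, 0 ≤ ρ x) (hρi : Integrable ρ)
    (s c : ℝ) :
    ∫ θ : ℝ, ec (-(s * θ)) * (firstMarginal ρ (c + θ) : ℂ) = ec (s * c) * Phi ρ s := by
  have hid : ∀ θ : ℝ, ec (-(s * θ)) * (firstMarginal ρ (c + θ) : ℂ)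
      = ec (s * c) * ((firstMarginal ρ (θ + c) : ℂ) * ec (-(s * (θ + c)))) := by
    intro θ
    rw [add_comm c θ, show (-(s * θ)) = s * c + -(s * (θ + c)) by ring, ec_add]
    ring
  simp_rw [hid]
  rw [integral_const_mul]
  congr 1
  exact integral_add_right_eq_self (fun u => (firstMarginal ρ u : ℂ) * ec (-(s * u))) c

lemma key (hρc : Continuous ρ) (hρ0 : ∀ x, 0 ≤ ρ x) (hρi : Integrable ρ)
    (hρ1 : ∫ x, ρ x = 1) (ν : Measure (Fin (m+1) → ℝ)) [IsFiniteMeasure ν]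
    (y : Fin (m+1) → ℝ) (s : ℝ) :
    ∫ θ : ℝ, ec (-(s * θ)) * ((∫ x, firstMarginal ρ (∑ i, y i * x i + θ) ∂ν : ℝ) : ℂ)
      = Phi ρ s * ∫ x, ec (s * ∑ i, y i * x i) ∂ν := by
  set c : (Fin (m+1) → ℝ) → ℝ := fun x => ∑ i, y i * x i with hc
  have hcm : Measurable c := by fun_prop
  set F : ℝ × (Fin (m+1) → ℝ) → ℂ :=
    fun p => ec (-(s * p.1)) * (firstMarginal ρ (c p.2 + p.1) : ℂ) with hF
  have hFsm : AEStronglyMeasurable F (volume.prod ν) := by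
    apply StronglyMeasurable.aestronglyMeasurable
    apply StronglyMeasurable.mul
    · exact (continuous_ec.comp (by fun_prop)).stronglyMeasurable
    · refine Complex.continuous_ofReal.comp_stronglyMeasurable ?_
      exact (marg_sm ρ hρc).comp_measurable (by fun_prop)
  have hFnorm : ∀ p : ℝ × (Fin (m+1) → ℝ), ‖F p‖ = firstMarginal ρ (c p.2 + p.1) := by
    intro p
    rw [hF]
    rw [norm_mul, norm_ec, one_mul, Complex.norm_real, Real.norm_eq_abs,
      _root_.abs_of_nonneg (marg_nonneg ρ hρ0 _)]
  have hx_int : ∀ x : Fin (m+1) → ℝ, Integrable (fun θ => F (θ, x)) volume := by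
    intro x
    have base : Integrable (fun θ : ℝ => (firstMarginal ρ θ : ℂ) * ec (-(s * θ))) volume :=
      g_integrable ρ hρc hρ0 hρi s
    have tr := (base.comp_add_right (c x)).mul_const (ec (s * c x))
    refine tr.congr ?_
    filter_upwards with θ
    show (firstMarginal ρ (θ + c x) : ℂ) * ec (-(s * (θ + c x))) * ec (s * c x)
        = ec (-(s * θ)) * (firstMarginal ρ (c x + θ) : ℂ)
    rw [add_comm (c x) θ, show (-(s * θ)) = -(s * (θ + c x)) + s * c x by ring, ec_add]
    ring
  have hInt : Integrable F (volume.prod ν) := by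
    rw [integrable_prod_iff' hFsm]
    constructor
    · filter_upwards with x
      exact hx_int x
    · have heq : (fun x => ∫ θ, ‖F (θ, x)‖) = fun _ => (1:ℝ) := by
        funext x
        have h2 : ∀ θ : ℝ, ‖F (θ, x)‖ = firstMarginal ρ (θ + c x) := by
          intro θ
          rw [hFnorm (θ, x), add_comm]
        simp_rw [h2]
        rw [integral_add_right_eq_self (firstMarginal ρ) (c x), marg_integral ρ hρi hρ1]
      rw [heq]
      exact integrable_const 1
  have swap := integral_integral_swap (f := fun θ x => F (θ, x)) (μ := volume) (ν := ν)
    (by exact hInt)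
  calc ∫ θ : ℝ, ec (-(s * θ)) * ((∫ x, firstMarginal ρ (∑ i, y i * x i + θ) ∂ν : ℝ) : ℂ)
      = ∫ θ : ℝ, ∫ x, F (θ, x) ∂ν := by
        congr 1
        funext θ
        rw [hF]
        rw [show ∫ x, ec (-(s * θ)) * (firstMarginal ρ (c x + θ) : ℂ) ∂ν
            = ec (-(s * θ)) * ∫ x, (firstMarginal ρ (c x + θ) : ℂ) ∂ν from
          integral_const_mul _ _]
        congr 1
        exact (integral_ofReal (f := fun x => firstMarginal ρ (c x + θ))).symm
    _ = ∫ x, ∫ θ : ℝ, F (θ, x) ∂volume ∂ν := swap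
    _ = ∫ x, ec (s * c x) * Phi ρ s ∂ν := by
        congr 1
        funext x
        exact inner_translate ρ hρc hρ0 hρi s (c x)
    _ = Phi ρ s * ∫ x, ec (s * ∑ i, y i * x i) ∂ν := by
        simp_rw [mul_comm (ec (s * c _)) (Phi ρ s)]
        exact integral_const_mul _ _

lemma char_eq (hρc : Continuous ρ) (hρ0 : ∀ x, 0 ≤ ρ x) (hρi : Integrable ρ)
    (hρ1 : ∫ x, ρ x = 1)
    (μ₁ μ₂ : Measure (Fin (m+1) → ℝ)) [IsFiniteMeasure μ₁] [IsFiniteMeasure μ₂]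
    (h : ∀ (y : Fin (m + 1) → ℝ) (θ : ℝ),
      ∫ x, firstMarginal ρ (∑ i, y i * x i + θ) ∂μ₁ =
      ∫ x, firstMarginal ρ (∑ i, y i * x i + θ) ∂μ₂)
    (ξ : Fin (m+1) → ℝ) :
    ∫ x, ec (∑ i, ξ i * x i) ∂μ₁ = ∫ x, ec (∑ i, ξ i * x i) ∂μ₂ := by
  obtain ⟨s₀, hs₀, hΦ⟩ := exists_s0 ρ hρc hρ0 hρi hρ1
  set y : Fin (m+1) → ℝ := fun i => s₀⁻¹ * ξ i with hy
  have k₁ := key ρ hρc hρ0 hρi hρ1 μ₁ y s₀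
  have k₂ := key ρ hρc hρ0 hρi hρ1 μ₂ y s₀
  have hLHS : ∫ θ : ℝ, ec (-(s₀ * θ)) * ((∫ x, firstMarginal ρ (∑ i, y i * x i + θ) ∂μ₁ : ℝ) : ℂ)
      = ∫ θ : ℝ, ec (-(s₀ * θ)) * ((∫ x, firstMarginal ρ (∑ i, y i * x i + θ) ∂μ₂ : ℝ) : ℂ) := by
    congr 1
    funext θ
    rw [h y θ]
  have heq := (k₁.symm.trans hLHS).trans k₂
  have hcancel := mul_left_cancel₀ hΦ heq
  have harg : ∀ x : Fin (m+1) → ℝ, s₀ * ∑ i, y i * x i = ∑ i, ξ i * x i := by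
    intro x
    rw [hy, Finset.mul_sum]
    refine Finset.sum_congr rfl fun i _ => ?_
    rw [← mul_assoc, ← mul_assoc, mul_inv_cancel₀ hs₀, one_mul]
  simp_rw [harg] at hcancel
  exact hcancel

lemma star_ec (r : ℝ) : star (ec r) = ec (-r) := by
  rw [Complex.star_def]
  rw [ec, ec, ← Complex.exp_conj]
  congr 1
  simp [Complex.conj_ofReal]

lemma ec_injective_aux {a b : ℝ} (hab : a - b = Real.pi) : ec a ≠ ec b := by
  intro heq
  have h1 : ec (a - b) * ec b = ec b := by
    rw [← ec_add, sub_add_cancel, heq]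
  have h2 : ec (a - b) = 1 := by
    have := mul_right_cancel₀ (a := ec (a - b)) (b := ec b) (c := 1) ?_ ?_
    · exact this
    · exact Complex.exp_ne_zero _
    · rw [one_mul]; exact h1
  rw [ec] at h2
  obtain ⟨n, hn⟩ := Complex.exp_eq_one_iff.mp h2
  have him := congrArg Complex.im hn
  simp at him
  rw [hab] at him
  have h1 : Real.pi * 1 = Real.pi * (n * 2) := by linarith [him]
  have h2 : (1 : ℝ) = n * 2 := mul_left_cancel₀ Real.pi_ne_zero h1
  have h3 : (1 : ℤ) = n * 2 := by exact_mod_cast h2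
  omega

lemma measures_eq_of_char_eq (Ω : Set (Fin (m+1) → ℝ)) (hΩ : IsCompact Ω)
    (μ₁ μ₂ : Measure (Fin (m+1) → ℝ)) [IsFiniteMeasure μ₁] [IsFiniteMeasure μ₂]
    (hμ₁ : μ₁ Ωᶜ = 0) (hμ₂ : μ₂ Ωᶜ = 0)
    (hc : ∀ ξ : Fin (m+1) → ℝ,
      ∫ x, ec (∑ i, ξ i * x i) ∂μ₁ = ∫ x, ec (∑ i, ξ i * x i) ∂μ₂) :
    μ₁ = μ₂ := by
  classical
  haveI : CompactSpace Ω := isCompact_iff_compactSpace.mp hΩ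
  have hmeas : MeasurableSet Ω := hΩ.isClosed.measurableSet
  have hemb : MeasurableEmbedding ((↑) : Ω → (Fin (m+1) → ℝ)) :=
    MeasurableEmbedding.subtype_coe hmeas
  set ν₁ : Measure Ω := μ₁.comap Subtype.val with hν₁
  set ν₂ : Measure Ω := μ₂.comap Subtype.val with hν₂
  haveI : IsFiniteMeasure ν₁ := by
    constructor
    rw [hν₁, hemb.comap_apply]
    exact measure_lt_top _ _
  haveI : IsFiniteMeasure ν₂ := by
    constructor
    rw [hν₂, hemb.comap_apply]
    exact measure_lt_top _ _
  have bridge : ∀ (μ : Measure (Fin (m+1) → ℝ)), μ Ωᶜ = 0 →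
      ∀ f : (Fin (m+1) → ℝ) → ℂ,
        ∫ x : Ω, f x ∂(μ.comap Subtype.val) = ∫ x, f x ∂μ := by
    intro μ hμ f
    rw [integral_subtype_comap hmeas f,
      Measure.restrict_eq_self_of_ae_mem (mem_ae_iff.mpr hμ)]
  -- integrability and continuity of integration on C(Ω, ℂ)
  have integC : ∀ (ν : Measure Ω) [IsFiniteMeasure ν] (f : C(Ω, ℂ)),
      Integrable (fun x => f x) ν := by
    intro ν _ f
    refine (integrable_const ‖f‖).mono' f.continuous.aestronglyMeasurable ?_
    filter_upwards with x
    exact f.norm_coe_le_norm x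
  have contI : ∀ (ν : Measure Ω) [IsFiniteMeasure ν],
      Continuous (fun f : C(Ω, ℂ) => ∫ x, f x ∂ν) := by
    intro ν _
    refine LipschitzWith.continuous (K := (ν Set.univ).toNNReal)
      (LipschitzWith.of_dist_le_mul fun f g => ?_)
    rw [dist_eq_norm, dist_eq_norm, ← integral_sub (integC ν f) (integC ν g)]
    have hb : ∀ x : Ω, ‖f x - g x‖ ≤ ‖f - g‖ := fun x => by
      simpa using (f - g).norm_coe_le_norm x
    calc ‖∫ x, (f x - g x) ∂ν‖ ≤ ‖f - g‖ * (ν Set.univ).toReal :=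
          norm_integral_le_of_norm_le_const (by filter_upwards with x using hb x)
      _ = ((ν Set.univ).toNNReal : ℝ) * ‖f - g‖ := by
          rw [mul_comm]; rfl
  -- the characters
  have χcont : ∀ ξ : Fin (m+1) → ℝ,
      Continuous fun x : Ω => ec (∑ i, ξ i * (x : Fin (m+1) → ℝ) i) := fun ξ =>
    continuous_ec.comp (continuous_finset_sum _ fun i _ =>
      continuous_const.mul ((continuous_apply i).comp continuous_subtype_val))
  set χ : (Fin (m+1) → ℝ) → C(Ω, ℂ) := fun ξ => ⟨_, χcont ξ⟩ with hχ
  have χ_apply : ∀ ξ (x : Ω), χ ξ x = ec (∑ i, ξ i * (x : Fin (m+1) → ℝ) i) :=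
    fun _ _ => rfl
  have χ_mul : ∀ ξ η, χ ξ * χ η = χ (ξ + η) := by
    intro ξ η
    ext x
    simp only [ContinuousMap.mul_apply, χ_apply]
    rw [← ec_add]
    congr 1
    rw [← Finset.sum_add_distrib]
    exact Finset.sum_congr rfl fun i _ => by simp [add_mul]
  have χ_star : ∀ ξ, star (χ ξ) = χ (-ξ) := by
    intro ξ
    ext x
    simp only [ContinuousMap.star_apply, χ_apply]
    rw [star_ec]
    congr 1
    simp [neg_mul, Finset.sum_neg_distrib]
  have χ_one : χ 0 = 1 := by
    ext x
    simp [χ_apply, ec_zero]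
  set S : Set C(Ω, ℂ) := Set.range χ with hS
  -- subtype-level characters agree
  have hc' : ∀ ξ, ∫ x : Ω, (χ ξ) x ∂ν₁ = ∫ x : Ω, (χ ξ) x ∂ν₂ := by
    intro ξ
    have b₁ := bridge μ₁ hμ₁ (fun v => ec (∑ i, ξ i * v i))
    have b₂ := bridge μ₂ hμ₂ (fun v => ec (∑ i, ξ i * v i))
    exact (b₁.trans (hc ξ)).trans b₂.symm
  -- separation of points
  have sep : (StarAlgebra.adjoin ℂ S).SeparatesPoints := by
    intro x y hxy
    have hval : (x : Fin (m+1) → ℝ) ≠ (y : Fin (m+1) → ℝ) :=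
      fun hv => hxy (Subtype.ext hv)
    obtain ⟨i, hi⟩ := Function.ne_iff.mp hval
    set d : ℝ := (x : Fin (m+1) → ℝ) i - (y : Fin (m+1) → ℝ) i with hd
    have hd0 : d ≠ 0 := sub_ne_zero.mpr hi
    set ξ : Fin (m+1) → ℝ := fun j => if j = i then Real.pi / d else 0 with hξ
    have sumval : ∀ z : Ω, ∑ j, ξ j * (z : Fin (m+1) → ℝ) j
        = Real.pi / d * (z : Fin (m+1) → ℝ) i := by
      intro z
      rw [Finset.sum_eq_single i]
      · simp [hξ]
      · intro b _ hb
        simp [hξ, hb]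
      · simp
    refine ⟨_, ⟨χ ξ, StarAlgebra.subset_adjoin ℂ S ⟨ξ, rfl⟩, rfl⟩, ?_⟩
    show (χ ξ) x ≠ (χ ξ) y
    rw [χ_apply, χ_apply, sumval x, sumval y]
    apply ec_injective_aux
    rw [← mul_sub, ← hd]
    field_simp
  have SW := ContinuousMap.starSubalgebra_topologicalClosure_eq_top_of_separatesPoints _ sep
  -- the submodule of functions with equal integrals
  set M : Submodule ℂ C(Ω, ℂ) :=
    { carrier := {f | ∫ x, f x ∂ν₁ = ∫ x, f x ∂ν₂}
      add_mem' := by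
        intro f g hf hg
        simp only [Set.mem_setOf_eq, ContinuousMap.add_apply] at *
        rw [integral_add (integC ν₁ f) (integC ν₁ g),
          integral_add (integC ν₂ f) (integC ν₂ g), hf, hg]
      zero_mem' := by simp
      smul_mem' := by
        intro c f hf
        simp only [Set.mem_setOf_eq, ContinuousMap.coe_smul, Pi.smul_apply] at *
        rw [integral_smul, integral_smul, hf] } with hM
  have hMclosed : IsClosed (M : Set C(Ω, ℂ)) := isClosed_eq (contI ν₁) (contI ν₂)
  have hSM : S ⊆ (M : Set C(Ω, ℂ)) := by
    rintro _ ⟨ξ, rfl⟩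
    exact hc' ξ
  -- the union with stars and the multiplicative closure collapse to S
  have hstarS : S ∪ star S = S := by
    apply Set.union_eq_self_of_subset_right
    intro f hf
    rw [Set.mem_star] at hf
    obtain ⟨ξ, hξf⟩ := hf
    refine ⟨-ξ, ?_⟩
    rw [← χ_star ξ, hξf, star_star]
  set Smonoid : Submonoid C(Ω, ℂ) :=
    { carrier := S
      one_mem' := ⟨0, χ_one⟩
      mul_mem' := by
        rintro _ _ ⟨ξ, rfl⟩ ⟨η, rfl⟩
        exact ⟨ξ + η, (χ_mul ξ η).symm⟩ } with hSmonoid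
  have hmono : ((Submonoid.closure S : Submonoid C(Ω, ℂ)) : Set C(Ω, ℂ)) ⊆ S :=
    fun f hf => (Submonoid.closure_le.mpr (fun x hx => hx) : Submonoid.closure S ≤ Smonoid) hf
  have hadj_span : ((StarAlgebra.adjoin ℂ S : StarSubalgebra ℂ C(Ω, ℂ)) : Set C(Ω, ℂ))
      ⊆ (Submodule.span ℂ S : Set C(Ω, ℂ)) := by
    intro f hf
    have hmem : f ∈ Subalgebra.toSubmodule (StarAlgebra.adjoin ℂ S).toSubalgebra := hf
    rw [StarAlgebra.adjoin_eq_span] at hmem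
    have hsub : ((Submonoid.closure (S ∪ star S) : Submonoid C(Ω, ℂ)) : Set C(Ω, ℂ)) ⊆ S := by
      rw [hstarS]
      exact hmono
    exact Submodule.span_mono hsub hmem
  have hall : ∀ f : C(Ω, ℂ), ∫ x, f x ∂ν₁ = ∫ x, f x ∂ν₂ := by
    intro f
    have htop : f ∈ (StarAlgebra.adjoin ℂ S).topologicalClosure := by
      rw [SW]
      trivial
    have hcl : f ∈ closure ((StarAlgebra.adjoin ℂ S : StarSubalgebra ℂ C(Ω, ℂ)) : Set C(Ω, ℂ)) := by
      rw [← StarSubalgebra.topologicalClosure_coe]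
      exact htop
    have hclM : f ∈ closure (M : Set C(Ω, ℂ)) :=
      closure_mono (Set.Subset.trans hadj_span
        (SetLike.coe_subset_coe.mpr (Submodule.span_le.mpr hSM))) hcl
    rw [hMclosed.closure_eq] at hclM
    exact hclM
  -- conclude equality of the measures
  apply ext_of_forall_lintegral_eq_of_IsFiniteMeasure
  intro f
  have hfc : Continuous fun x : Ω => ((f (x : Fin (m+1) → ℝ) : ℝ) : ℂ) :=
    Complex.continuous_ofReal.comp (NNReal.continuous_coe.comp
      (f.continuous.comp continuous_subtype_val))
  have h2 := hall ⟨_, hfc⟩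
  have b₁ := bridge μ₁ hμ₁ (fun v => ((f v : ℝ) : ℂ))
  have b₂ := bridge μ₂ hμ₂ (fun v => ((f v : ℝ) : ℂ))
  have h3 : ∫ x, ((f x : ℝ) : ℂ) ∂μ₁ = ∫ x, ((f x : ℝ) : ℂ) ∂μ₂ :=
    (b₁.symm.trans h2).trans b₂
  have e₁ : ∫ x, ((f x : ℝ) : ℂ) ∂μ₁ = ((∫ x, ((f x : ℝ)) ∂μ₁ : ℝ) : ℂ) := integral_ofReal
  have e₂ : ∫ x, ((f x : ℝ) : ℂ) ∂μ₂ = ((∫ x, ((f x : ℝ)) ∂μ₂ : ℝ) : ℂ) := integral_ofReal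
  have hre : ∫ x, ((f x : ℝ)) ∂μ₁ = ∫ x, ((f x : ℝ)) ∂μ₂ := by
    have hco := (e₁.symm.trans h3).trans e₂
    exact_mod_cast hco
  have l₁ := BoundedContinuousFunction.toReal_lintegral_coe_eq_integral f μ₁
  have l₂ := BoundedContinuousFunction.toReal_lintegral_coe_eq_integral f μ₂
  refine (ENNReal.toReal_eq_toReal_iff'
    (BoundedContinuousFunction.lintegral_lt_top_of_nnreal μ₁ f).ne
    (BoundedContinuousFunction.lintegral_lt_top_of_nnreal μ₂ f).ne).mp ?_
  rw [l₁, l₂]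
  exact hre

end Stmt3Aux

/-- The first marginal of a continuous density is discriminatory in the sense of Cybenko:
a finite signed Borel measure (represented as a difference `μ₁ − μ₂` of finite measures)
supported on a compact set `Ω` that integrates all ridge functions `x ↦ ρ₁(yᵀx + θ)` to zero
must vanish. -/
theorem stmt3 {m : ℕ} (Ω : Set (Fin (m + 1) → ℝ)) (hΩ : IsCompact Ω)
    (ρ : (Fin (m + 1) → ℝ) → ℝ) (hρ_cont : Continuous ρ)
    (hρ_pos : ∀ x, 0 ≤ ρ x) (hρ_int : ∫ x, ρ x = 1)
    (μ₁ μ₂ : Measure (Fin (m + 1) → ℝ)) [IsFiniteMeasure μ₁] [IsFiniteMeasure μ₂]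
    (hμ₁ : μ₁ Ωᶜ = 0) (hμ₂ : μ₂ Ωᶜ = 0)
    (h : ∀ (y : Fin (m + 1) → ℝ) (θ : ℝ),
      ∫ x, firstMarginal ρ (∑ i, y i * x i + θ) ∂μ₁ =
      ∫ x, firstMarginal ρ (∑ i, y i * x i + θ) ∂μ₂) :
    μ₁ = μ₂ := by
  have hρi : Integrable ρ := by
    by_contra hni
    rw [integral_undef hni] at hρ_int
    norm_num at hρ_int
  apply Stmt3Aux.measures_eq_of_char_eq Ω hΩ μ₁ μ₂ hμ₁ hμ₂
  intro ξ
  exact Stmt3Aux.char_eq ρ hρ_cont hρ_pos hρi hρ_int μ₁ μ₂ h ξ
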